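/- There exists a free filter F on ℕ such that, identified with a subset of Cantor space 2^ω, F has μ-measure zero but does not have the Baire property. -/

import Mathlib

open MeasureTheory

/-- `F` is a filter of subsets of `ℕ`: it contains `ℕ`, is closed under finite (binary)
intersections and under supersets. -/
def IsSetFilter (F : Set (Set ℕ)) : Prop :=
  Set.univ ∈ F ∧ (∀ X ∈ F, ∀ Y ∈ F, X ∩ Y ∈ F) ∧ (∀ X ∈ F, ∀ Y : Set ℕ, X ⊆ Y → Y ∈ F)

/-- A free filter: a proper filter containing every cofinite subset of `ℕ`
(so every member of `F` is infinite). -/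
def IsFreeFilter (F : Set (Set ℕ)) : Prop :=
  IsSetFilter F ∧ ∅ ∉ F ∧ ∀ X : Set ℕ, Xᶜ.Finite → X ∈ F

open scoped Classical in
/-- The characteristic function of `X ⊆ ℕ`, as a point of Cantor space `2^ω = ℕ → Bool`. -/
noncomputable def chi (X : Set ℕ) : ℕ → Bool := fun n => if n ∈ X then true else false

/-- `μ` is the canonical product probability measure on Cantor space (the infinite product
of uniform measures on `{0,1}`, i.e. Haar measure): every cylinder determined by values on
a finite set `s` has measure `(1/2)^|s|`. -/
def IsCantorMeasure (μ : Measure (ℕ → Bool)) : Prop :=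
  ∀ (s : Finset ℕ) (f : ℕ → Bool),
    μ {x : ℕ → Bool | ∀ i ∈ s, x i = f i} = (1 / 2 : ENNReal) ^ s.card

open Filter Topology Set

namespace Talagrand

/-- Block offsets: `o k` is the start of the `k`-th block, of size `k+1`. -/
def o : ℕ → ℕ
  | 0 => 0
  | k+1 => o k + (k+1)

lemma o_succ (k : ℕ) : o (k+1) = o k + (k+1) := rfl

lemma o_lt_succ (k : ℕ) : o k < o (k+1) := by rw [o_succ]; omega

lemma o_mono : Monotone o := monotone_nat_of_le_succ fun k => (o_lt_succ k).le

lemma le_o (k : ℕ) : k ≤ o k := by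
  induction k with
  | zero => simp [o]
  | succ n ih => rw [o_succ]; omega

/-- The block index of a coordinate. -/
def blk (i : ℕ) : ℕ := Nat.findGreatest (fun k => o k ≤ i) i

lemma o_blk_le (i : ℕ) : o (blk i) ≤ i :=
  Nat.findGreatest_spec (P := fun k => o k ≤ i) (Nat.zero_le i) (by simp [o])

lemma lt_o_blk_succ (i : ℕ) : i < o (blk i + 1) := by
  by_contra h
  push_neg at h
  exact Nat.findGreatest_is_greatest (P := fun k => o k ≤ i) (Nat.lt_succ_self _)
    (le_trans (le_o _) h) h

lemma blk_eq {k i : ℕ} (h1 : o k ≤ i) (h2 : i < o (k+1)) : blk i = k := by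
  rcases lt_trichotomy (blk i) k with h | h | h
  · exact absurd ((o_mono (Nat.succ_le_of_lt h)).trans h1) (not_le_of_gt (lt_o_blk_succ i))
  · exact h
  · exact absurd ((o_mono (Nat.succ_le_of_lt h)).trans (o_blk_le i))
      (not_le_of_gt h2)

lemma blk_lt {i M : ℕ} (h : i < o M) : blk i < M := by
  by_contra hM
  push_neg at hM
  exact absurd ((o_mono hM).trans (o_blk_le i)) (not_le_of_gt h)

/-- The set of blocks fully contained in `{i | x i = true}`. -/
def blockSet (x : ℕ → Bool) : Set ℕ :=
  {k | ∀ i, o k ≤ i → i < o (k+1) → x i = true}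

/-- The Talagrand filter. -/
def Fset : Set (Set ℕ) :=
  {X | {k | ∀ i, o k ≤ i → i < o (k+1) → i ∈ X} ∈ Filter.hyperfilter ℕ}

def Aset : Set (ℕ → Bool) := {x | blockSet x ∈ Filter.hyperfilter ℕ}

lemma chi_eq_true_iff {X : Set ℕ} {n : ℕ} : chi X n = true ↔ n ∈ X := by
  simp [chi]

lemma chi_image : chi '' Fset = Aset := by
  ext x
  constructor
  · rintro ⟨X, hX, rfl⟩
    have : blockSet (chi X) = {k | ∀ i, o k ≤ i → i < o (k+1) → i ∈ X} := by
      ext k; simp [blockSet, chi_eq_true_iff]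
    simpa [Aset, Fset, this] using hX
  · intro hx
    refine ⟨{i | x i = true}, ?_, ?_⟩
    · simpa [Fset, Aset, blockSet] using hx
    · funext n
      simp only [chi]
      by_cases h : x n = true <;> simp [h]

lemma freeFilter : IsFreeFilter Fset := by
  refine ⟨⟨?_, ?_, ?_⟩, ?_, ?_⟩
  · have h : {k : ℕ | ∀ i, o k ≤ i → i < o (k+1) → i ∈ (Set.univ : Set ℕ)} = Set.univ := by
      ext k; simp
    show {k : ℕ | ∀ i, o k ≤ i → i < o (k+1) → i ∈ (Set.univ : Set ℕ)} ∈ Filter.hyperfilter ℕ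
    rw [h]
    exact Filter.univ_mem
  · intro X hX Y hY
    have := Filter.inter_mem hX hY
    refine Filter.mem_of_superset this ?_
    rintro k ⟨h1, h2⟩ i hi1 hi2
    exact ⟨h1 i hi1 hi2, h2 i hi1 hi2⟩
  · intro X hX Y hXY
    refine Filter.mem_of_superset hX fun k hk i hi1 hi2 => hXY (hk i hi1 hi2)
  · intro h
    have : {k : ℕ | ∀ i, o k ≤ i → i < o (k+1) → i ∈ (∅ : Set ℕ)} = ∅ := by
      ext k
      simp only [Set.mem_setOf_eq, Set.mem_empty_iff_false, iff_false]
      intro h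
      exact h (o k) le_rfl (o_lt_succ k)
    rw [Fset, Set.mem_setOf_eq, this] at h
    exact (Filter.empty_notMem _) h
  · intro X hX
    obtain ⟨N, hN⟩ : ∃ N, ∀ n, N ≤ n → n ∈ X := by
      rcases Set.Finite.bddAbove hX with ⟨N, hN⟩
      refine ⟨N+1, fun n hn => ?_⟩
      by_contra h
      exact absurd (hN h) (by omega)
    refine Filter.mem_of_superset
      (Filter.mem_hyperfilter_of_finite_compl (s := Set.Ici N) (by simpa using Set.finite_Iio N)) ?_
    intro k hk i hi1 hi2
    exact hN i (le_trans (Set.mem_Ici.mp hk) (le_trans (le_o k) hi1))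


lemma measure_zero (μ : Measure (ℕ → Bool)) (hμ : IsCantorMeasure μ) :
    μ (chi '' Fset) = 0 := by
  -- measure of the "full block k" cylinder
  have hC : ∀ k : ℕ, μ {x : ℕ → Bool | ∀ i ∈ Finset.Ico (o k) (o (k+1)), x i = true}
      = (1/2 : ENNReal) ^ (k+1) := by
    intro k
    have := hμ (Finset.Ico (o k) (o (k+1))) (fun _ => true)
    rw [this, Nat.card_Ico, o_succ]
    congr 1
    omega
  -- the image is contained in each tail union
  have hsub : ∀ N : ℕ, chi '' Fset ⊆
      ⋃ k : ℕ, {x : ℕ → Bool | ∀ i ∈ Finset.Ico (o (N+k)) (o (N+k+1)), x i = true} := by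
    intro N x hx
    rw [chi_image] at hx
    have hinf : (blockSet x).Infinite := by
      intro hfin
      exact Filter.notMem_hyperfilter_of_finite hfin hx
    have : ¬ blockSet x ⊆ Set.Iio N := fun h => hinf (Set.Finite.subset (Set.finite_Iio N) h)
    rw [Set.not_subset] at this
    obtain ⟨k, hk, hkN⟩ := this
    simp only [Set.mem_Iio, not_lt] at hkN
    refine Set.mem_iUnion.mpr ⟨k - N, ?_⟩
    have hNk : N + (k - N) = k := by omega
    rw [hNk]
    intro i hi
    rw [Finset.mem_Ico] at hi
    exact hk i hi.1 hi.2
  -- conclude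
  have hbound : ∀ N : ℕ, μ (chi '' Fset) ≤ (1/2 : ENNReal) ^ N * (1 - 1/2 : ENNReal)⁻¹ := by
    intro N
    calc μ (chi '' Fset)
        ≤ μ (⋃ k : ℕ, {x : ℕ → Bool | ∀ i ∈ Finset.Ico (o (N+k)) (o (N+k+1)), x i = true}) :=
          measure_mono (hsub N)
      _ ≤ ∑' k : ℕ, μ {x : ℕ → Bool | ∀ i ∈ Finset.Ico (o (N+k)) (o (N+k+1)), x i = true} :=
          measure_iUnion_le _
      _ ≤ ∑' k : ℕ, (1/2 : ENNReal) ^ N * (1/2 : ENNReal) ^ k := by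
          refine ENNReal.tsum_le_tsum fun k => ?_
          rw [hC (N+k), ← pow_add]
          exact pow_le_pow_of_le_one zero_le (by norm_num) (by omega)
      _ = (1/2 : ENNReal) ^ N * (1 - 1/2 : ENNReal)⁻¹ := by
          rw [ENNReal.tsum_mul_left, ENNReal.tsum_geometric]
  have htend : Filter.Tendsto (fun N : ℕ => (1/2 : ENNReal) ^ N * (1 - 1/2 : ENNReal)⁻¹)
      Filter.atTop (nhds 0) := by
    have h1 : Filter.Tendsto (fun N : ℕ => (1/2 : ENNReal) ^ N) Filter.atTop (nhds 0) :=
      ENNReal.tendsto_pow_atTop_nhds_zero_of_lt_one (by norm_num)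
    have := ENNReal.Tendsto.mul_const h1 (b := (1 - 1/2 : ENNReal)⁻¹)
      (Or.inr (by norm_num))
    simpa using this
  have := ge_of_tendsto' htend hbound
  exact le_antisymm this zero_le


section Topo

lemma isOpen_cylPt (x : ℕ → Bool) (m : ℕ) :
    IsOpen {y : ℕ → Bool | ∀ j, j < m → y j = x j} := by
  have h : {y : ℕ → Bool | ∀ j, j < m → y j = x j}
      = ⋂ j ∈ Finset.range m, (fun y : ℕ → Bool => y j) ⁻¹' {x j} := by
    ext y; simp [Finset.mem_range]
  rw [h]
  exact isOpen_biInter_finset fun j _ =>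
    (isOpen_discrete _).preimage (continuous_apply j)

lemma exists_cyl_subset {O : Set (ℕ → Bool)} (hO : IsOpen O) {x : ℕ → Bool} (hx : x ∈ O) :
    ∃ m : ℕ, {y : ℕ → Bool | ∀ j, j < m → y j = x j} ⊆ O := by
  obtain ⟨I, v, h1, h2⟩ := isOpen_pi_iff.mp hO x hx
  refine ⟨I.sup id + 1, fun y hy => h2 ?_⟩
  intro a ha
  have : a < I.sup id + 1 := Nat.lt_succ_of_le (Finset.le_sup (f := id) ha)
  rw [Set.mem_setOf_eq] at hy
  rw [hy a this]
  exact (h1 a ha).2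

lemma meagre_union {X : Type*} [TopologicalSpace X] {s t : Set X}
    (hs : IsMeagre s) (ht : IsMeagre t) : IsMeagre (s ∪ t) := by
  rw [IsMeagre, Set.compl_union]
  exact Filter.inter_mem hs ht

lemma not_meagre_univ : ¬ IsMeagre (Set.univ : Set (ℕ → Bool)) := by
  intro h
  rw [IsMeagre, Set.compl_univ] at h
  exact Set.not_nonempty_empty (dense_of_mem_residual h).nonempty

/-- The coordinate-flip homeomorphism of Cantor space. -/
def flipHomeo : Homeomorph (ℕ → Bool) (ℕ → Bool) where
  toFun := fun x n => !(x n)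
  invFun := fun x n => !(x n)
  left_inv := fun x => by funext n; simp
  right_inv := fun x => by funext n; simp
  continuous_toFun := continuous_pi fun i =>
    (continuous_of_discreteTopology (f := fun b : Bool => !b)).comp (continuous_apply i)
  continuous_invFun := continuous_pi fun i =>
    (continuous_of_discreteTopology (f := fun b : Bool => !b)).comp (continuous_apply i)

end Topo

lemma aset_inv {x x' : ℕ → Bool} {N : ℕ} (h : ∀ i, N ≤ i → x i = x' i)
    (hx : x ∈ Aset) : x' ∈ Aset := by
  have hsub : blockSet x ∩ Set.Ici N ⊆ blockSet x' := by
    rintro k ⟨hk, hkN⟩ i hi1 hi2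
    rw [← h i (le_trans (le_trans (Set.mem_Ici.mp hkN) (le_o k)) hi1)]
    exact hk i hi1 hi2
  exact Filter.mem_of_superset
    (Filter.inter_mem hx
      (Filter.mem_hyperfilter_of_finite_compl (by simpa using Set.finite_Iio N))) hsub

lemma aset_flip {x : ℕ → Bool} (hx : x ∈ Aset) (hx' : flipHomeo x ∈ Aset) : False := by
  have hdisj : blockSet x ∩ blockSet (flipHomeo x) = ∅ := by
    ext k
    simp only [Set.mem_inter_iff, Set.mem_empty_iff_false, iff_false, not_and]
    intro h1 h2
    have e1 := h1 (o k) le_rfl (o_lt_succ k)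
    have e2 := h2 (o k) le_rfl (o_lt_succ k)
    simp only [flipHomeo, Homeomorph.homeomorph_mk_coe, Equiv.coe_fn_mk] at e2
    rw [e1] at e2
    simp at e2
  have := Filter.inter_mem hx hx'
  rw [hdisj] at this
  exact Filter.empty_notMem _ this


/-! ### The fusion construction -/

/-- The section map determined by default values `W`: block `k` is all-ones
if `y k = true`, and given by `W` otherwise. -/
def gfun (W : ℕ → Bool) (y : ℕ → Bool) : ℕ → Bool := fun i => cond (y (blk i)) true (W i)

lemma gfun_continuous (W : ℕ → Bool) : Continuous (gfun W) :=
  continuous_pi fun i =>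
    (continuous_of_discreteTopology (f := fun b : Bool => cond b true (W i))).comp
      (continuous_apply (blk i))

lemma mem_aset_of_gfun {W y : ℕ → Bool}
    (hy : {k | y k = true} ∈ Filter.hyperfilter ℕ) : gfun W y ∈ Aset := by
  refine Filter.mem_of_superset hy ?_
  intro k hk i hi1 hi2
  have hyk : y k = true := hk
  simp only [gfun, blk_eq hi1 hi2, hyk, cond_true]

lemma step_ex {Un : Set (ℕ → Bool)} (hUo : IsOpen Un) (hUd : Dense Un)
    (σ : List Bool) (f : ℕ) (hf : σ.length ≤ f) (W : ℕ → Bool) :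
    ∃ M : ℕ, f < M ∧ ∃ W' : ℕ → Bool,
      (∀ i, i < o f → W' i = W i) ∧
      (∀ V : ℕ → Bool, (∀ i, i < o M → V i = W' i) →
        ∀ y : ℕ → Bool, (∀ j, j < M → y j = σ.getD j false) → gfun V y ∈ Un) := by
  classical
  have hcyl : IsOpen {x : ℕ → Bool |
      ∀ i, i < o f → x i = gfun W (fun j => σ.getD j false) i} := isOpen_cylPt _ (o f)
  obtain ⟨x₁, hx₁cyl, hx₁U⟩ := hUd.inter_open_nonempty _ hcyl ⟨_, fun i _ => rfl⟩
  obtain ⟨m, hm⟩ := exists_cyl_subset (hUo.inter hcyl) ⟨hx₁U, hx₁cyl⟩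
  refine ⟨max (f+1) m, by omega, fun i => if i < o f then W i else x₁ i,
    fun i hi => by simp [hi], ?_⟩
  intro V hV y hy
  have key : ∀ i, i < m → gfun V y i = x₁ i := by
    intro i him
    have hioM : i < o (max (f+1) m) :=
      lt_of_lt_of_le him (le_trans (le_max_right _ _) (le_o _))
    have hk : blk i < max (f+1) m := blk_lt hioM
    have hyk : y (blk i) = σ.getD (blk i) false := hy (blk i) hk
    have hVi : V i = if i < o f then W i else x₁ i := hV i hioM
    rcases Bool.eq_false_or_eq_true (σ.getD (blk i) false) with hb | hb
    · -- value true
      have hlen : blk i < σ.length := by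
        by_contra hc
        push_neg at hc
        rw [List.getD_eq_default _ _ hc] at hb
        exact Bool.false_ne_true hb
      have hiof : i < o f :=
        lt_of_lt_of_le (lt_o_blk_succ i)
          (o_mono (Nat.succ_le_of_lt (lt_of_lt_of_le hlen hf)))
      have hx₁i : x₁ i = gfun W (fun j => σ.getD j false) i := hx₁cyl i hiof
      rw [hx₁i]
      show (cond (y (blk i)) true (V i)) = cond (σ.getD (blk i) false) true (W i)
      rw [hyk, hb]
      simp
    · -- value false
      have hg1 : gfun V y i = V i := by
        show cond (y (blk i)) true (V i) = V i
        rw [hyk, hb]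
        simp
      by_cases hif : i < o f
      · have hx₁i : x₁ i = gfun W (fun j => σ.getD j false) i := hx₁cyl i hif
        have hW : gfun W (fun j => σ.getD j false) i = W i := by
          show cond (σ.getD (blk i) false) true (W i) = W i
          rw [hb]
          simp
        rw [hg1, hVi, if_pos hif, hx₁i, hW]
      · rw [hg1, hVi, if_neg hif]
  exact (hm key).1

/-- A fixed enumeration of all requirements. -/
noncomputable instance : Denumerable (List Bool) := Denumerable.ofEncodableOfInfinite _

noncomputable def enum (t : ℕ) : ℕ × List Bool := Denumerable.ofNat (ℕ × List Bool) t

lemma enum_surj : Function.Surjective enum := fun p =>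
  ⟨@Encodable.encode (ℕ × List Bool) Denumerable.toEncodable p, by
    unfold enum; exact Denumerable.ofNat_encode p⟩

section Fusion

variable (u : ℕ → Set (ℕ → Bool)) (hu : ∀ n, IsOpen (u n)) (hd : ∀ n, Dense (u n))

noncomputable def step (n : ℕ) (σ : List Bool) (p : ℕ × (ℕ → Bool)) : ℕ × (ℕ → Bool) :=
  ((step_ex (hu n) (hd n) σ (max p.1 σ.length) (le_max_right _ _) p.2).choose,
   (step_ex (hu n) (hd n) σ (max p.1 σ.length) (le_max_right _ _) p.2).choose_spec.2.choose)

lemma step_spec (n : ℕ) (σ : List Bool) (p : ℕ × (ℕ → Bool)) :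
    max p.1 σ.length < (step u hu hd n σ p).1 ∧
    (∀ i, i < o (max p.1 σ.length) → (step u hu hd n σ p).2 i = p.2 i) ∧
    (∀ V : ℕ → Bool, (∀ i, i < o (step u hu hd n σ p).1 → V i = (step u hu hd n σ p).2 i) →
      ∀ y : ℕ → Bool, (∀ j, j < (step u hu hd n σ p).1 → y j = σ.getD j false) →
        gfun V y ∈ u n) := by
  have h := (step_ex (hu n) (hd n) σ (max p.1 σ.length) (le_max_right _ _) p.2).choose_spec
  exact ⟨h.1, h.2.choose_spec.1, h.2.choose_spec.2⟩

noncomputable def St : ℕ → ℕ × (ℕ → Bool)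
  | 0 => (0, fun _ => false)
  | t+1 => step u hu hd (enum t).1 (enum t).2 (St t)

lemma St_lt_succ (t : ℕ) : (St u hu hd t).1 < (St u hu hd (t+1)).1 :=
  lt_of_le_of_lt (le_max_left _ _) (step_spec u hu hd (enum t).1 (enum t).2 (St u hu hd t)).1

lemma St_mono : Monotone fun t => (St u hu hd t).1 :=
  monotone_nat_of_le_succ fun t => (St_lt_succ u hu hd t).le

lemma St_ge (t : ℕ) : t ≤ (St u hu hd t).1 := by
  induction t with
  | zero => exact Nat.zero_le _
  | succ n ih => exact lt_of_le_of_lt ih (St_lt_succ u hu hd n)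

lemma St_agree {t s : ℕ} (h : t ≤ s) :
    ∀ i, i < o (St u hu hd t).1 → (St u hu hd s).2 i = (St u hu hd t).2 i := by
  induction s with
  | zero =>
    intro i hi
    have : t = 0 := Nat.le_zero.mp h
    rw [this]
  | succ n ih =>
    intro i hi
    rcases Nat.lt_or_ge t (n+1) with h1 | h1
    · have h2 : t ≤ n := Nat.lt_succ_iff.mp h1
      have h3 : i < o (max (St u hu hd n).1 (enum n).2.length) :=
        lt_of_lt_of_le hi (o_mono (le_trans (St_mono u hu hd h2) (le_max_left _ _)))
      have := (step_spec u hu hd (enum n).1 (enum n).2 (St u hu hd n)).2.1 i h3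
      rw [show St u hu hd (n+1) = step u hu hd (enum n).1 (enum n).2 (St u hu hd n) from rfl]
      rw [this]
      exact ih h2 i hi
    · have : t = n+1 := le_antisymm h h1
      rw [this]

noncomputable def Wlim : ℕ → Bool := fun i => (St u hu hd (i+1)).2 i

lemma Wlim_agree (t : ℕ) : ∀ i, i < o (St u hu hd t).1 → Wlim u hu hd i = (St u hu hd t).2 i := by
  intro i hi
  rcases le_total t (i+1) with h | h
  · exact St_agree u hu hd h i hi
  · have h1 : i < o (St u hu hd (i+1)).1 :=
      lt_of_lt_of_le (lt_of_lt_of_le (Nat.lt_succ_self i) (St_ge u hu hd (i+1))) (le_o _)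
    exact (St_agree u hu hd h i h1).symm

lemma dense_g_preimage (n : ℕ) : Dense (gfun (Wlim u hu hd) ⁻¹' (u n)) := by
  rw [dense_iff_inter_open]
  rintro O hO ⟨x, hx⟩
  obtain ⟨m, hm⟩ := exists_cyl_subset hO hx
  set σ : List Bool := List.ofFn (fun j : Fin m => x j) with hσ
  obtain ⟨t, ht⟩ := enum_surj (n, σ)
  set y₀ : ℕ → Bool := fun j => σ.getD j false with hy₀
  have hy₀O : y₀ ∈ O := by
    apply hm
    intro j hj
    have hjl : j < σ.length := by simpa [hσ] using hj
    simp [hy₀, hσ, List.getD_eq_getElem?_getD, hj]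
  have hgy₀ : gfun (Wlim u hu hd) y₀ ∈ u n := by
    have hspec := (step_spec u hu hd (enum t).1 (enum t).2 (St u hu hd t)).2.2
    rw [show step u hu hd (enum t).1 (enum t).2 (St u hu hd t) = St u hu hd (t+1) from rfl]
      at hspec
    rw [ht] at hspec
    exact hspec (Wlim u hu hd) (Wlim_agree u hu hd (t+1)) y₀ (fun j _ => rfl)
  exact ⟨y₀, hy₀O, hgy₀⟩

end Fusion

/-- The main nonmeagerness result: the Talagrand filter is not meager. -/
lemma aset_not_meagre : ¬ IsMeagre Aset := by
  intro hmeag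
  rw [IsMeagre] at hmeag
  obtain ⟨tG, htsub, htGδ, htd⟩ := mem_residual.mp hmeag
  obtain ⟨T, hTo, hTc, rfl⟩ := htGδ
  have hne : (insert Set.univ T).Nonempty := ⟨_, Set.mem_insert _ _⟩
  obtain ⟨u, hu⟩ := (hTc.insert Set.univ).exists_eq_range hne
  have huo : ∀ n, IsOpen (u n) := by
    intro n
    have : u n ∈ insert Set.univ T := hu ▸ Set.mem_range_self n
    rcases this with h | h
    · rw [h]; exact isOpen_univ
    · exact hTo _ h
  have husub : ∀ n, ⋂₀ T ⊆ u n := by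
    intro n
    have : u n ∈ insert Set.univ T := hu ▸ Set.mem_range_self n
    rcases this with h | h
    · rw [h]; exact Set.subset_univ _
    · exact Set.sInter_subset_of_mem h
  have hud : ∀ n, Dense (u n) := fun n => htd.mono (husub n)
  set g := gfun (Wlim u huo hud) with hg
  -- the ultrafilter set in `y`-space
  set Uhat : Set (ℕ → Bool) := {y | {k | y k = true} ∈ Filter.hyperfilter ℕ} with hUhat
  have hUmeag : IsMeagre Uhat := by
    rw [IsMeagre]
    have hres : ⋂ n, g ⁻¹' (u n) ∈ residual (ℕ → Bool) := by
      rw [countable_iInter_mem]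
      intro n
      exact residual_of_dense_open ((huo n).preimage (gfun_continuous _))
        (dense_g_preimage u huo hud n)
    refine Filter.mem_of_superset hres ?_
    intro y hy hyU
    have hgA : g y ∈ Aset := mem_aset_of_gfun hyU
    have hgT : g y ∈ ⋂₀ T := by
      rw [Set.mem_iInter] at hy
      intro s hs
      have : s ∈ insert Set.univ T := Set.mem_insert_of_mem _ hs
      rw [hu] at this
      obtain ⟨n, rfl⟩ := this
      exact hy n
    exact (htsub hgT) hgA
  have hUcmeag : IsMeagre Uhatᶜ := by
    have hsub : Uhatᶜ ⊆ flipHomeo ⁻¹' Uhat := by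
      intro y hy
      have : {k | y k = true} ∉ Filter.hyperfilter ℕ := hy
      have hc : {k | y k = true}ᶜ ∈ Filter.hyperfilter ℕ :=
        (Ultrafilter.compl_mem_iff_notMem).mpr this
      have heq : {k | flipHomeo y k = true} = {k | y k = true}ᶜ := by
        ext k
        simp [flipHomeo]
      show {k | flipHomeo y k = true} ∈ Filter.hyperfilter ℕ
      rw [heq]
      exact hc
    exact (hUmeag.preimage_of_isOpenMap flipHomeo.continuous flipHomeo.isOpenMap).mono hsub
  have : IsMeagre (Set.univ : Set (ℕ → Bool)) := by
    have := meagre_union hUmeag hUcmeag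
    rwa [Set.union_compl_self] at this
  exact not_meagre_univ this


lemma xor_cancel_left (a b : Bool) : xor a (xor a b) = b := by cases a <;> cases b <;> rfl

lemma xor_cancel_right (a b : Bool) : xor (xor a b) b = a := by cases a <;> cases b <;> rfl

/-- XOR-translation homeomorphisms adjusting the first `m` coordinates of `x`
to match `x₀`. -/
noncomputable def transHomeo (m : ℕ) (x₀ : ℕ → Bool) (p : Fin m → Bool) :
    Homeomorph (ℕ → Bool) (ℕ → Bool) := by
  have hinv : Function.Involutive (fun x : ℕ → Bool => fun i =>
      if h : i < m then xor (x i) (xor (p ⟨i, h⟩) (x₀ i)) else x i) := by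
    intro x
    funext i
    by_cases h : i < m
    · simp only [h, dif_pos]
      exact xor_cancel_right _ _
    · simp only [h, dif_neg, not_false_iff]
  exact
  { toEquiv := hinv.toPerm _
    continuous_toFun := continuous_pi fun i =>
      (continuous_of_discreteTopology
        (f := fun b : Bool => if h : i < m then xor b (xor (p ⟨i, h⟩) (x₀ i)) else b)).comp
        (continuous_apply i)
    continuous_invFun := continuous_pi fun i =>
      (continuous_of_discreteTopology
        (f := fun b : Bool => if h : i < m then xor b (xor (p ⟨i, h⟩) (x₀ i)) else b)).comp
        (continuous_apply i) }

lemma transHomeo_apply (m : ℕ) (x₀ : ℕ → Bool) (p : Fin m → Bool) (x : ℕ → Bool) (i : ℕ) :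
    transHomeo m x₀ p x i = if h : i < m then xor (x i) (xor (p ⟨i, h⟩) (x₀ i)) else x i :=
  rfl

lemma aset_not_baireMeasurable : ¬ BaireMeasurableSet Aset := by
  intro hB
  obtain ⟨O, hO, hOE⟩ := hB.residualEq_isOpen
  have hEres : {x : ℕ → Bool | (x ∈ Aset) = (x ∈ O)} ∈ residual (ℕ → Bool) := hOE
  rcases Set.eq_empty_or_nonempty O with hOemp | ⟨x₀, hx₀⟩
  · -- the open set is empty: `Aset` is meager, contradiction
    apply aset_not_meagre
    have hEc : IsMeagre {x : ℕ → Bool | (x ∈ Aset) = (x ∈ O)}ᶜ := by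
      show _ ∈ residual _
      rwa [compl_compl]
    refine hEc.mono ?_
    intro x hx hxE
    have : x ∈ O := by
      have h1 : (x ∈ Aset) = (x ∈ O) := hxE
      rw [← h1]
      exact hx
    rw [hOemp] at this
    exact this
  · -- the open set is nonempty: `Aset` is comeager, contradiction
    obtain ⟨m, hm⟩ := exists_cyl_subset hO hx₀
    have hAc : IsMeagre Asetᶜ := by
      have cover : Asetᶜ ⊆
          ⋃ p : Fin m → Bool, transHomeo m x₀ p ⁻¹' {x : ℕ → Bool | (x ∈ Aset) = (x ∈ O)}ᶜ := by
        intro x hx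
        refine Set.mem_iUnion.mpr ⟨fun j => x j, ?_⟩
        set y := transHomeo m x₀ (fun j : Fin m => x j) x with hy
        have hyO : y ∈ O := by
          apply hm
          intro j hj
          rw [hy, transHomeo_apply, dif_pos hj]
          exact xor_cancel_left _ _
        have hyAc : y ∉ Aset := by
          intro hyA
          apply hx
          refine aset_inv (x := y) (N := m) ?_ hyA
          intro i hi
          rw [hy, transHomeo_apply, dif_neg (not_lt_of_ge hi)]
        intro hyE
        have h1 : (y ∈ Aset) = (y ∈ O) := hyE
        exact hyAc (h1 ▸ hyO)
      have hmeag : IsMeagre (⋃ p : Fin m → Bool,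
          transHomeo m x₀ p ⁻¹' {x : ℕ → Bool | (x ∈ Aset) = (x ∈ O)}ᶜ) := by
        rw [IsMeagre, Set.compl_iUnion]
        rw [countable_iInter_mem]
        intro p
        rw [← Set.preimage_compl, compl_compl]
        exact tendsto_residual_of_isOpenMap (transHomeo m x₀ p).continuous
          (transHomeo m x₀ p).isOpenMap hEres
      exact hmeag.mono cover
    have hflip : IsMeagre (flipHomeo ⁻¹' Asetᶜ) :=
      hAc.preimage_of_isOpenMap flipHomeo.continuous flipHomeo.isOpenMap
    have hres : Aset ∩ flipHomeo ⁻¹' Aset ∈ residual (ℕ → Bool) := by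
      have h1 := meagre_union hAc hflip
      rw [IsMeagre, Set.compl_union, compl_compl, ← Set.preimage_compl, compl_compl] at h1
      exact h1
    obtain ⟨x, hx1, hx2⟩ := (dense_of_mem_residual hres).nonempty
    exact aset_flip hx1 hx2

end Talagrand

/-- (Talagrand) There exists a free filter on `ℕ` which has `μ`-measure zero but does not
have the Baire property. -/
theorem exists_null_filter_without_baire_property
    (μ : Measure (ℕ → Bool)) (hμ : IsCantorMeasure μ) :
    ∃ F : Set (Set ℕ), IsFreeFilter F ∧ μ (chi '' F) = 0 ∧
      ¬ BaireMeasurableSet (chi '' F) := by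
  refine ⟨Talagrand.Fset, Talagrand.freeFilter, Talagrand.measure_zero μ hμ, ?_⟩
  rw [Talagrand.chi_image]
  exact Talagrand.aset_not_baireMeasurable
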